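/- arXiv:1611.03991 — 2 statements merged into one kernel-verified Lean document; each statement's English description precedes it below -/
import Mathlib

section
/- Let T be a tournament with two disjoint minimal τ-retentive sets R1 and R2, u → v an arc in the directed domination graph of T[R1], and z → w an arc in the directed domination graph of T[R2]. Then: u ≻ w iff v ≻ z; u ≻ z iff v ≻ w; and exactly one of (u ≻ w) and (u ≻ z) holds. -/
variable {V : Type}

/-- Inneighbors of `v` inside the subtournament on `s` (excluding `v` itself). -/
def inn [DecidableEq V] (r : V → V → Prop) [DecidableRel r] (s : Finset V) (v : V) :
    Finset V :=
  (s.filter fun u => r u v).erase v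

lemma inn_card_lt [DecidableEq V] (r : V → V → Prop) [DecidableRel r]
    (s : Finset V) (v : V) (hv : v ∈ s) : (inn r s v).card < s.card := by
  have h1 : inn r s v ⊆ s.erase v := by
    intro x hx
    rcases Finset.mem_erase.mp hx with ⟨hxv, hx2⟩
    exact Finset.mem_erase.mpr ⟨hxv, (Finset.mem_filter.mp hx2).1⟩
  calc (inn r s v).card ≤ (s.erase v).card := Finset.card_le_card h1
    _ < s.card := Finset.card_erase_lt_of_mem hv

/-- The tournament equilibrium set of the subtournament of `r` on `s`:
the union of all minimal τ-retentive sets. -/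
def tau [DecidableEq V] (r : V → V → Prop) [DecidableRel r] (s : Finset V) : Set V :=
  {x | ∃ A : Finset V, x ∈ A ∧ A ⊆ s ∧ A.Nonempty ∧
    (∀ v, v ∈ s → v ∈ A → ((inn r s v).Nonempty → tau r (inn r s v) ⊆ ↑A)) ∧
    ∀ B : Finset V, B ⊆ s → B ⊂ A →
      ¬ (B.Nonempty ∧
        ∀ v, v ∈ s → v ∈ B → ((inn r s v).Nonempty → tau r (inn r s v) ⊆ ↑B))}
termination_by s.card
decreasing_by
  all_goals exact inn_card_lt r s v (by assumption)

/-- `A` is a τ-retentive set of the tournament on `s`. -/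
def Retentive [DecidableEq V] (r : V → V → Prop) [DecidableRel r] (s A : Finset V) : Prop :=
  A ⊆ s ∧ A.Nonempty ∧ ∀ v ∈ A, (inn r s v).Nonempty → tau r (inn r s v) ⊆ ↑A

/-- `A` is a minimal τ-retentive set of the tournament on `s`. -/
def MinRetentive [DecidableEq V] (r : V → V → Prop) [DecidableRel r] (s A : Finset V) : Prop :=
  Retentive r s A ∧ ∀ B, Retentive r s B → B ⊆ A → B = A

/-- `r` is a tournament on the vertex set `s`. -/
def IsTournament (r : V → V → Prop) (s : Finset V) : Prop :=
  (∀ v ∈ s, ¬ r v v) ∧ ∀ u ∈ s, ∀ v ∈ s, u ≠ v → (r u v ↔ ¬ r v u)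

/-- `u` is the captain of `v` in the subtournament on `s`:
`u` dominates `v` and all other inneighbors of `v`. -/
def IsCaptain (r : V → V → Prop) (s : Finset V) (u v : V) : Prop :=
  u ∈ s ∧ v ∈ s ∧ r u v ∧ ∀ w ∈ s, w ≠ u → r w v → r u w

/-- The (undirected) domination graph of the subtournament on `s`. -/
def domGraph (r : V → V → Prop) (s : Finset V) : SimpleGraph V where
  Adj u v := (IsCaptain r s u v ∨ IsCaptain r s v u) ∧ u ≠ v
  symm := by
    constructor
    intro u v h
    exact ⟨h.1.symm, h.2.symm⟩
  loopless := by
    constructor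
    intro u h
    exact h.2 rfl


/-!
If `u` is the captain of `v` in `T[R]` for a τ-retentive set `R`, then `u` is the captain of `v`
in `T`: every vertex of `τ(inn v) ⊆ R` other than `u` beats `v`, hence is beaten by `u`, and a
vertex beating every other vertex of `τ(E)` beats every other vertex of `E` (induction on `|E|`,
using that a minimal τ-retentive set of `E` must contain it). So in `T` every vertex other than
`u`, `v` is beaten by `u` or by `v`, and likewise for `z`, `w`; comparing the four cross arcs
between `{u, v}` and `{z, w}` with asymmetry gives the three claims.
-/

section Tau

variable [DecidableEq V] {r : V → V → Prop} [DecidableRel r]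

lemma mem_inn {E : Finset V} {v x : V} : x ∈ inn r E v ↔ x ≠ v ∧ x ∈ E ∧ r x v := by
  simp [inn]

lemma inn_subset (E : Finset V) (v : V) : inn r E v ⊆ E := fun _ hx => (mem_inn.mp hx).2.1

lemma minRetentive_iff_minimal {E A : Finset V} :
    MinRetentive r E A ↔ Minimal (Retentive r E) A :=
  and_congr_right fun _ => forall_congr' fun _ => imp_congr_right fun _ =>
    ⟨fun h hBA => (h hBA).ge, fun h hBA => hBA.antisymm (h hBA)⟩

lemma mem_tau_iff {E : Finset V} {x : V} :
    x ∈ tau r E ↔ ∃ A, x ∈ A ∧ MinRetentive r E A := by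
  rw [tau]
  refine exists_congr fun A => and_congr_right fun _ => ?_
  constructor
  · rintro ⟨hAE, hA, hret, hmin⟩
    refine ⟨⟨hAE, hA, fun v hv => hret v (hAE hv) hv⟩, fun B ⟨hBE, hB, hBret⟩ hBA => ?_⟩
    by_contra hne
    exact hmin B hBE (Finset.ssubset_iff_subset_ne.mpr ⟨hBA, hne⟩)
      ⟨hB, fun v _ hv => hBret v hv⟩
  · rintro ⟨⟨hAE, hA, hret⟩, hmin⟩
    refine ⟨hAE, hA, fun v _ hv => hret v hv, fun B hBE hBA ⟨hB, hBret⟩ => hBA.ne ?_⟩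
    exact hmin B ⟨hBE, hB, fun v hv => hBret v (hBE hv) hv⟩ hBA.subset

lemma MinRetentive.subset_tau {E A : Finset V} (hA : MinRetentive r E A) : ↑A ⊆ tau r E :=
  fun _ hx => mem_tau_iff.mpr ⟨A, hx, hA⟩

lemma tau_subset (E : Finset V) : tau r E ⊆ ↑E := by
  rintro x hx
  obtain ⟨A, hxA, hA, -⟩ := mem_tau_iff.mp hx
  exact hA.1 hxA

lemma Retentive.exists_minRetentive_subset {E A : Finset V} (hA : Retentive r E A) :
    ∃ C ⊆ A, MinRetentive r E C := by
  obtain ⟨C, hCA, hC⟩ := exists_minimal_le_of_wellFoundedLT (Retentive r E) A hA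
  exact ⟨C, hCA, minRetentive_iff_minimal.mpr hC⟩

lemma retentive_self {E : Finset V} (hE : E.Nonempty) : Retentive r E E :=
  ⟨subset_rfl, hE, fun v _ _ => (tau_subset _).trans (by exact_mod_cast inn_subset E v)⟩

lemma exists_minRetentive {E : Finset V} (hE : E.Nonempty) : ∃ A, MinRetentive r E A :=
  let ⟨A, _, hA⟩ := (retentive_self (r := r) hE).exists_minRetentive_subset
  ⟨A, hA⟩

lemma tau_nonempty {E : Finset V} (hE : E.Nonempty) : (tau r E).Nonempty := by
  obtain ⟨A, hA⟩ := exists_minRetentive (r := r) hE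
  obtain ⟨x, hx⟩ := hA.1.2.1
  exact ⟨x, hA.subset_tau hx⟩

lemma mem_tau_of_inn_eq_empty {E : Finset V} {u : V} (hu : u ∈ E) (h : inn r E u = ∅) :
    u ∈ tau r E := by
  refine mem_tau_iff.mpr ⟨{u}, Finset.mem_singleton_self u, ?_, fun B hB hBu => ?_⟩
  · refine ⟨Finset.singleton_subset_iff.mpr hu, Finset.singleton_nonempty u, fun v hv hinn => ?_⟩
    rw [Finset.mem_singleton.mp hv, h] at hinn
    exact absurd hinn Finset.not_nonempty_empty
  · exact (Finset.Nonempty.subset_singleton_iff hB.2.1).mp hBu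

lemma inn_eq_empty_of_forall_tau_rel {E : Finset V} (hr : ∀ a ∈ E, ∀ b ∈ E, r a b → ¬ r b a)
    {u : V} (hu : u ∈ E) (h : ∀ y ∈ tau r E, y ≠ u → r u y) : inn r E u = ∅ := by
  induction E using Finset.strongInduction generalizing u with
  | H E ih =>
    obtain ⟨A, hA⟩ := exists_minRetentive (r := r) ⟨u, hu⟩
    have huA : u ∈ A := by
      by_contra huA
      obtain ⟨a, ha⟩ := hA.1.2.1
      have hau : a ≠ u := fun hau => huA (hau ▸ ha)
      have hu_inn : u ∈ inn r E a := mem_inn.mpr ⟨hau.symm, hu, h a (hA.subset_tau ha) hau⟩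
      have htau : tau r (inn r E a) ⊆ ↑A := hA.1.2.2 a ha ⟨u, hu_inn⟩
      have hlt : inn r E a ⊂ E := Finset.ssubset_iff_of_subset (inn_subset E a) |>.mpr
        ⟨a, hA.1.1 ha, fun h => (mem_inn.mp h).1 rfl⟩
      have hwin : inn r (inn r E a) u = ∅ :=
        ih _ hlt (fun x hx y hy => hr x (inn_subset E a hx) y (inn_subset E a hy)) hu_inn
          fun y hy hyu => h y (hA.subset_tau (htau hy)) hyu
      exact huA (htau (mem_tau_of_inn_eq_empty hu_inn hwin))
    by_contra hne
    obtain ⟨y, hy⟩ := tau_nonempty (r := r) (Finset.nonempty_iff_ne_empty.mpr hne)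
    have htau : tau r (inn r E u) ⊆ ↑A :=
      hA.1.2.2 u huA (Finset.nonempty_iff_ne_empty.mpr hne)
    obtain ⟨hyu, hyE, hyu'⟩ := mem_inn.mp (tau_subset _ hy)
    exact hr y hyE u hu hyu' (h y (hA.subset_tau (htau hy)) hyu)

end Tau

section Captain

variable {r : V → V → Prop} {s : Finset V}

lemma IsTournament.asymm (hT : IsTournament r s) {a b : V} (ha : a ∈ s) (hb : b ∈ s)
    (hab : r a b) : ¬ r b a := by
  rcases eq_or_ne a b with rfl | hne
  · exact hT.1 a ha
  · exact (hT.2 a ha b hb hne).mp hab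

lemma IsCaptain.rel_or_rel (hT : IsTournament r s) {u v x : V} (hc : IsCaptain r s u v)
    (hx : x ∈ s) (hxu : x ≠ u) (hxv : x ≠ v) : r v x ∨ r u x := by
  by_cases hvx : r v x
  · exact Or.inl hvx
  · exact Or.inr (hc.2.2.2 x hx hxu ((hT.2 x hx v hc.2.1 hxv).mpr hvx))

lemma IsCaptain.of_retentive [DecidableEq V] [DecidableRel r] (hT : IsTournament r s)
    {R : Finset V} (hR : Retentive r s R) {u v : V} (hc : IsCaptain r R u v) :
    IsCaptain r s u v := by
  obtain ⟨huR, hvR, huv, hcap⟩ := hc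
  have hus := hR.1 huR
  have hvs := hR.1 hvR
  have hu : u ∈ inn r s v :=
    mem_inn.mpr ⟨fun h => hT.1 v hvs (h ▸ huv), hus, huv⟩
  have htau : tau r (inn r s v) ⊆ ↑R := hR.2.2 v hvR ⟨u, hu⟩
  have hwin : inn r (inn r s v) u = ∅ :=
    inn_eq_empty_of_forall_tau_rel
      (fun a ha b hb => hT.asymm (inn_subset s v ha) (inn_subset s v hb)) hu
      fun y hy hyu => hcap y (htau hy) hyu (mem_inn.mp (tau_subset _ hy)).2.2
  refine ⟨hus, hvs, huv, fun x hx hxu hxv => ?_⟩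
  have hxv' : x ≠ v := fun h => hT.1 v hvs (h ▸ hxv)
  have hx_inn : x ∈ inn r s v := mem_inn.mpr ⟨hxv', hx, hxv⟩
  refine (hT.2 u hus x hx hxu.symm).mpr fun hxu' => ?_
  exact Finset.notMem_empty x (hwin ▸ mem_inn.mpr ⟨hxu, hx_inn, hxu'⟩)

end Captain

theorem stmt13 [DecidableEq V] (r : V → V → Prop) [DecidableRel r] (s : Finset V)
    (hT : IsTournament r s) (R1 R2 : Finset V)
    (h1 : MinRetentive r s R1) (h2 : MinRetentive r s R2) (hd : Disjoint R1 R2)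
    (u v z w : V) (harc1 : IsCaptain r R1 u v) (harc2 : IsCaptain r R2 z w) :
    (r u w ↔ r v z) ∧ (r u z ↔ r v w) ∧ Xor' (r u w) (r u z) := by
  have hne := Finset.disjoint_iff_ne.mp hd
  have huz := hne u harc1.1 z harc2.1
  have huw := hne u harc1.1 w harc2.2.1
  have hvz := hne v harc1.2.1 z harc2.1
  have hvw := hne v harc1.2.1 w harc2.2.1
  have cu := harc1.of_retentive hT h1.1
  have cz := harc2.of_retentive hT h2.1
  have hz := cu.rel_or_rel hT cz.1 huz.symm hvz.symm
  have hw := cu.rel_or_rel hT cz.2.1 huw.symm hvw.symm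
  have hu := cz.rel_or_rel hT cu.1 huz huw
  have hv := cz.rel_or_rel hT cu.2.1 hvz hvw
  have := hT.asymm cu.1 cz.2.1; have := hT.asymm cu.1 cz.1
  have := hT.asymm cu.2.1 cz.2.1; have := hT.asymm cu.2.1 cz.1
  show _ ∧ _ ∧ (_ ∨ _)
  tauto
end

section
/- Let T be a tournament with a minimal τ-retentive set R of size 3, and let R' be another minimal τ-retentive set of T. Suppose v ∈ R', S is a minimal τ-retentive set of T[N⁻_T(v)], and the directed domination graph of T[S] contains a directed cycle C. Then a contradiction follows; i.e., no such configuration exists. -/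
variable {V : Type}

/-!
The key fact is that no vertex of a tournament dominates both ends of a captain arc of a
τ-retentive set `A`: a τ-retentive set of the in-neighbourhood of the dominated end lies in `A`,
and the captain dominates all its other elements, which is impossible whether or not the captain
belongs to it.

A minimal τ-retentive set `R` of size 3 is a directed triangle of captain arcs, so `v ∉ R` is
dominated by both ends `p, q` of one of them. Both lie in `N⁻(v)` but outside `S ⊆ R'`, every
vertex of `S` is dominated by `p` or `q`, and neither dominates two consecutive vertices of `C`;
so `p` and `q` alternate along `C`, which therefore has even length. But a cycle of captain arcs
in a tournament has odd length (Fisher et al.).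
-/

variable {r : V → V → Prop}

section Tournament

variable {s t : Finset V} {u w : V}

theorem IsTournament.mono (hT : IsTournament r s) (hts : t ⊆ s) : IsTournament r t :=
  ⟨fun x hx => hT.1 x (hts hx), fun x hx y hy => hT.2 x (hts hx) y (hts hy)⟩

theorem IsTournament.asymm_s17 (hT : IsTournament r s) (hu : u ∈ s) (hw : w ∈ s)
    (huw : r u w) : ¬ r w u := by
  rintro hwu
  obtain rfl | hne := eq_or_ne u w
  · exact hT.1 u hu huw
  · exact (hT.2 u hu w hw hne).1 huw hwu

theorem IsTournament.rel_of_not_rel (hT : IsTournament r s) (hu : u ∈ s) (hw : w ∈ s)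
    (hne : u ≠ w) (huw : ¬ r u w) : r w u :=
  (hT.2 w hw u hu hne.symm).2 huw

theorem IsTournament.isCaptain_of_triangle (hT : IsTournament r s) {x y z : V} (hx : x ∈ s)
    (hy : y ∈ s) (hz : z ∈ s) (hs : ∀ w ∈ s, w = x ∨ w = y ∨ w = z) (hxy : r x y)
    (hyz : r y z) : IsCaptain r s x y := by
  refine ⟨hx, hy, hxy, fun w hw hwx hwy => ?_⟩
  obtain rfl | rfl | rfl := hs w hw
  · exact absurd rfl hwx
  · exact absurd hwy (hT.1 w hy)
  · exact absurd hwy (hT.asymm_s17 hy hz hyz)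

end Tournament

section Retentive

variable [DecidableEq V] [DecidableRel r] {s A B : Finset V} {u : V}

@[simp]
theorem mem_inn_s17 {z : V} : z ∈ inn r s u ↔ z ≠ u ∧ z ∈ s ∧ r z u := by
  simp [inn]

theorem inn_subset_s17 : inn r s u ⊆ s := fun _ hz => (mem_inn_s17.1 hz).2.1

theorem tau_subset_s17 : tau r s ⊆ ↑s := by
  intro x hx
  rw [tau] at hx
  obtain ⟨A, hxA, hAs, -⟩ := hx
  exact hAs hxA

theorem retentive_self_s17 (hs : s.Nonempty) : Retentive r s s :=
  ⟨subset_rfl, hs, fun _ _ _ => (tau_subset_s17 (r := r)).trans (Finset.coe_subset.2 inn_subset_s17)⟩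

theorem exists_minRetentive_s17 (hs : s.Nonempty) : ∃ A, MinRetentive r s A := by
  classical
  obtain ⟨A, hA, hmin⟩ := Finset.exists_min_image (s.powerset.filter (Retentive r s))
    Finset.card ⟨s, by simpa using retentive_self_s17 hs⟩
  rw [Finset.mem_filter] at hA
  exact ⟨A, hA.2, fun B hB hBA =>
    Finset.eq_of_subset_of_card_le hBA (hmin B (by simpa using ⟨hB.1, hB⟩))⟩

theorem MinRetentive.coe_subset_tau (hA : MinRetentive r s A) : ↑A ⊆ tau r s := by
  intro x hx
  rw [tau]
  refine ⟨A, hx, hA.1.1, hA.1.2.1, fun v _ hv => hA.1.2.2 v hv, ?_⟩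
  rintro B hBs hBA ⟨hBne, hB⟩
  exact hBA.ne (hA.2 B ⟨hBs, hBne, fun v hv => hB v (hBs hv) hv⟩ hBA.subset)

theorem MinRetentive.disjoint (hA : MinRetentive r s A) (hB : MinRetentive r s B)
    (hne : A ≠ B) : Disjoint A B := by
  rw [Finset.disjoint_iff_ne]
  rintro x hxA _ hxB rfl
  have hAB : Retentive r s (A ∩ B) :=
    ⟨Finset.inter_subset_left.trans hA.1.1, ⟨x, Finset.mem_inter.2 ⟨hxA, hxB⟩⟩,
      fun v hv hinn => by
        rw [Finset.mem_inter] at hv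
        rw [Finset.coe_inter]
        exact Set.subset_inter (hA.1.2.2 v hv.1 hinn) (hB.1.2.2 v hv.2 hinn)⟩
  exact hne ((hA.2 _ hAB Finset.inter_subset_left).symm.trans
    (hB.2 _ hAB Finset.inter_subset_right))

theorem Retentive.exists_retentive_inn_subset (hA : Retentive r s A) (hu : u ∈ A)
    (hinn : (inn r s u).Nonempty) : ∃ B, Retentive r (inn r s u) B ∧ B ⊆ A := by
  obtain ⟨B, hB⟩ := exists_minRetentive_s17 (r := r) hinn
  exact ⟨B, hB.1, fun b hb => hA.2.2 u hu hinn (hB.coe_subset_tau hb)⟩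

theorem Retentive.not_forall_rel {s A : Finset V} {p : V} (hirr : ∀ x ∈ s, ¬ r x x)
    (hA : Retentive r s A) (hp : p ∈ s) : ¬ ∀ a ∈ A, r p a := by
  intro hdom
  obtain ⟨a, ha⟩ := hA.2.1
  have hpa : p ∈ inn r s a := mem_inn_s17.2 ⟨fun h => hirr p hp (h ▸ hdom a ha), hp, hdom a ha⟩
  obtain ⟨B, hB, hBA⟩ := hA.exists_retentive_inn_subset ha ⟨p, hpa⟩
  exact Retentive.not_forall_rel (fun x hx => hirr x (inn_subset_s17 hx)) hB hpa
    (fun b hb => hdom b (hBA hb))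
termination_by s.card
decreasing_by exact inn_card_lt r s a (hA.1 ha)

theorem Retentive.not_rel_of_isCaptain (hT : IsTournament r s) (hA : Retentive r s A)
    {a b w : V} (hab : IsCaptain r A a b) (hw : w ∈ s) (hwa : r w a) (hwb : r w b) :
    False := by
  obtain ⟨haA, hbA, hrab, hmax⟩ := hab
  have hD : IsTournament r (inn r s b) := hT.mono inn_subset_s17
  have hwD : w ∈ inn r s b := mem_inn_s17.2 ⟨fun h => hT.1 w hw (h ▸ hwb), hw, hwb⟩
  have haD : a ∈ inn r s b :=
    mem_inn_s17.2 ⟨fun h => hT.1 a (hA.1 haA) (h ▸ hrab), hA.1 haA, hrab⟩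
  obtain ⟨B, hB, hBA⟩ := hA.exists_retentive_inn_subset hbA ⟨w, hwD⟩
  have hdom : ∀ x ∈ B, x ≠ a → r a x :=
    fun x hx hxa => hmax x (hBA hx) hxa (mem_inn_s17.1 (hB.1 hx)).2.2
  -- If `a ∈ B`, then `w` is an in-neighbour of `a` in `inn r s b`, so retentiveness puts one
  -- into `B`, against `hdom`; otherwise `a` dominates all of `B`.
  by_cases haB : a ∈ B
  · have hwDa : w ∈ inn r (inn r s b) a :=
      mem_inn_s17.2 ⟨fun h => hT.1 w hw (h ▸ hwa), hwD, hwa⟩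
    obtain ⟨C, hC, hCB⟩ := hB.exists_retentive_inn_subset haB ⟨w, hwDa⟩
    obtain ⟨x, hx⟩ := hC.2.1
    obtain ⟨hxa, hxD, hrxa⟩ := mem_inn_s17.1 (hC.1 hx)
    exact hD.asymm_s17 haD hxD (hdom x (hCB hx) hxa) hrxa
  · exact hB.not_forall_rel hD.1 haD fun x hx => hdom x hx (ne_of_mem_of_not_mem hx haB)

end Retentive

section Triangle

variable [DecidableEq V] [DecidableRel r] {s R : Finset V}

theorem MinRetentive.exists_rel_mem (hR : MinRetentive r s R) (hcard : R.card ≠ 1) {u : V}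
    (hu : u ∈ R) : ∃ z ∈ R, r z u := by
  by_cases hinn : (inn r s u).Nonempty
  · obtain ⟨B, hB, hBR⟩ := hR.1.exists_retentive_inn_subset hu hinn
    obtain ⟨z, hz⟩ := hB.2.1
    exact ⟨z, hBR hz, (mem_inn_s17.1 (hB.1 hz)).2.2⟩
  · have hsingle : Retentive r s {u} :=
      ⟨Finset.singleton_subset_iff.2 (hR.1.1 hu), Finset.singleton_nonempty u,
        fun w hw h => absurd ((Finset.mem_singleton.1 hw) ▸ h) hinn⟩
    exact absurd (by rw [← hR.2 _ hsingle (Finset.singleton_subset_iff.2 hu)]; rfl) hcard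

theorem MinRetentive.exists_isCaptain_triangle (hT : IsTournament r s)
    (hR : MinRetentive r s R) (hcard : R.card = 3) :
    ∃ x y z, IsCaptain r R x y ∧ IsCaptain r R y z ∧ IsCaptain r R z x := by
  have hin : ∀ u ∈ R, ∃ z ∈ R, r z u := fun u => hR.exists_rel_mem (by omega)
  obtain ⟨a, b, d, hab, had, hbd, rfl⟩ := Finset.card_eq_three.1 hcard
  have hRT : IsTournament r {a, b, d} := hT.mono hR.1.1
  simp only [Finset.mem_insert, Finset.mem_singleton, forall_eq_or_imp, forall_eq,
    exists_eq_or_imp] at hin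
  obtain ⟨ha, hb, hd⟩ : a ∈ ({a, b, d} : Finset V) ∧ b ∈ ({a, b, d} : Finset V) ∧
      d ∈ ({a, b, d} : Finset V) := by simp
  have hcover : ∀ w ∈ ({a, b, d} : Finset V), w = a ∨ w = b ∨ w = d := by simp
  have hnaa := hRT.1 a ha
  have hnbb := hRT.1 b hb
  have hndd := hRT.1 d hd
  have hab' := hRT.2 a ha b hb hab
  have had' := hRT.2 a ha d hd had
  have hbd' := hRT.2 b hb d hd hbd
  have horient : (r a b ∧ r b d ∧ r d a) ∨ (r b a ∧ r a d ∧ r d b) := by grind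
  rcases horient with ⟨h1, h2, h3⟩ | ⟨h1, h2, h3⟩
  · exact ⟨a, b, d, hRT.isCaptain_of_triangle ha hb hd hcover h1 h2,
      hRT.isCaptain_of_triangle hb hd ha (by grind) h2 h3,
      hRT.isCaptain_of_triangle hd ha hb (by grind) h3 h1⟩
  · exact ⟨b, a, d, hRT.isCaptain_of_triangle hb ha hd (by grind) h1 h2,
      hRT.isCaptain_of_triangle ha hd hb (by grind) h2 h3,
      hRT.isCaptain_of_triangle hd hb ha (by grind) h3 h1⟩

theorem Retentive.exists_isCaptain_rel_of_triangle (hT : IsTournament r s)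
    (hR : Retentive r s R) {x y z v : V} (hxy : IsCaptain r R x y) (hyz : IsCaptain r R y z)
    (hzx : IsCaptain r R z x) (hv : v ∈ s) (hvR : v ∉ R) :
    ∃ p q, IsCaptain r R p q ∧ r p v ∧ r q v := by
  have hcmp : ∀ {u}, u ∈ R → (r u v ↔ ¬ r v u) := fun hu =>
    hT.2 _ (hR.1 hu) v hv (ne_of_mem_of_not_mem hu hvR)
  by_cases hxv : r x v
  · by_cases hyv : r y v
    · exact ⟨x, y, hxy, hxv, hyv⟩
    · have hvy : r v y := of_not_not (mt (hcmp hxy.2.1).2 hyv)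
      exact ⟨z, x, hzx, (hcmp hzx.1).2 (hR.not_rel_of_isCaptain hT hyz hv hvy ·), hxv⟩
  · have hvx : r v x := of_not_not (mt (hcmp hxy.1).2 hxv)
    exact ⟨y, z, hyz, (hcmp hyz.1).2 (hR.not_rel_of_isCaptain hT hxy hv hvx),
      (hcmp hzx.1).2 (fun hvz => hR.not_rel_of_isCaptain hT hzx hv hvz hvx)⟩

end Triangle

section Cycle

variable {S : Finset V} {n : ℕ} {f : ℕ → V}

theorem even_of_forall_iff_not {P : ℕ → Prop} (hP : ∀ j, P (j + 1) ↔ ¬ P j)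
    (hn : P n ↔ P 0) : Even n := by
  have hpar : ∀ j, P j ↔ (P 0 ↔ Even j) := by
    intro j
    induction j with
    | zero => simp
    | succ j ih => rw [hP, ih, Nat.even_add_one]; tauto
  have hpn := hpar n
  tauto

theorem exists_periodic_of_isCaptain_fin_cycle (hn : 0 < n) {c : Fin n → V}
    (hinj : Function.Injective c)
    (hcyc : ∀ i : Fin n, IsCaptain r S (c i) (c ⟨(i.val + 1) % n, Nat.mod_lt _ hn⟩)) :
    ∃ f : ℕ → V, (∀ j, f (j + n) = f j) ∧
      (∀ j k, 0 < k → k < n → f j ≠ f (j + k)) ∧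
      ∀ j, IsCaptain r S (f j) (f (j + 1)) := by
  refine ⟨fun j => c ⟨j % n, Nat.mod_lt _ hn⟩, fun j => by simp, fun j k hk hkn h => ?_,
    fun j => by simpa [Nat.mod_add_mod] using hcyc ⟨j % n, Nat.mod_lt _ hn⟩⟩
  have hmod : j % n = (j + k) % n := congrArg Fin.val (hinj h)
  have hdvd : n ∣ k := by
    simpa using (Nat.modEq_iff_dvd' (Nat.le_add_right j k)).1 hmod
  exact absurd (Nat.le_of_dvd hk hdvd) (by omega)

theorem IsTournament.rel_iff_odd_of_isCaptain_path (hT : IsTournament r S)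
    (hinj : ∀ j k, 0 < k → k < n → f j ≠ f (j + k))
    (hcap : ∀ j, IsCaptain r S (f j) (f (j + 1))) :
    ∀ k, 0 < k → k < n → ∀ j, (r (f j) (f (j + k)) ↔ Odd k) := by
  intro k
  induction k with
  | zero => intro h; omega
  | succ k ih =>
    intro _ hkn j
    rcases Nat.eq_zero_or_pos k with rfl | hk
    · simpa using (hcap j).2.2.1
    rw [Nat.odd_add_one]
    by_cases hodd : Odd k
    · have hjk := (ih hk (by omega) j).2 hodd
      refine iff_of_false (fun h => ?_) (not_not.2 hodd)
      exact hT.asymm_s17 (hcap j).1 (hcap (j + k)).1 hjk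
        ((hcap (j + k)).2.2.2 _ (hcap j).1 (hinj j k hk (by omega)) h)
    · have hne : f (j + (k + 1)) ≠ f j := (hinj j (k + 1) (by omega) hkn).symm
      have hback : r (f (j + (k + 1))) (f (j + 1)) := by
        refine hT.rel_of_not_rel (hcap j).2.1 (hcap (j + k)).2.1 ?_ ?_
        · simpa [add_assoc, add_comm 1 k] using hinj (j + 1) k hk (by omega)
        · simpa [add_assoc, add_comm 1 k] using mt (ih hk (by omega) (j + 1)).1 hodd
      exact iff_of_true ((hcap j).2.2.2 _ (hcap (j + (k + 1))).1 hne hback) hodd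

theorem IsTournament.odd_of_isCaptain_cycle (hT : IsTournament r S) (hn : 0 < n)
    (hper : ∀ j, f (j + n) = f j) (hinj : ∀ j k, 0 < k → k < n → f j ≠ f (j + k))
    (hcap : ∀ j, IsCaptain r S (f j) (f (j + 1))) : Odd n := by
  by_contra hodd
  have hn2 : 2 ≤ n := by rcases Nat.not_odd_iff_even.1 hodd with ⟨m, rfl⟩; omega
  have hback : r (f 1) (f (1 + (n - 1))) :=
    (hT.rel_iff_odd_of_isCaptain_path hinj hcap (n - 1) (by omega) (by omega) 1).2
      (by rcases Nat.not_odd_iff_even.1 hodd with ⟨m, rfl⟩; exact ⟨m - 1, by omega⟩)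
  rw [show 1 + (n - 1) = 0 + n by omega, hper] at hback
  exact hT.asymm_s17 (hcap 0).1 (hcap 0).2.1 (hcap 0).2.2.1 hback

theorem Retentive.even_of_isCaptain_cycle [DecidableEq V] [DecidableRel r] {s : Finset V}
    (hT : IsTournament r s) (hS : Retentive r s S) {p q : V} (hp : p ∈ s) (hq : q ∈ s)
    (hpS : p ∉ S) (hqS : q ∉ S) (hpq : ∀ w ∈ S, r w p → r w q → False)
    (hper : ∀ j, f (j + n) = f j) (hcap : ∀ j, IsCaptain r S (f j) (f (j + 1))) :
    Even n := by
  have hcover : ∀ j, r p (f j) ∨ r q (f j) := by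
    intro j
    have hfj := (hcap j).1
    by_contra! h
    exact hpq _ hfj (hT.rel_of_not_rel hp (hS.1 hfj) (ne_of_mem_of_not_mem hfj hpS).symm h.1)
      (hT.rel_of_not_rel hq (hS.1 hfj) (ne_of_mem_of_not_mem hfj hqS).symm h.2)
  refine even_of_forall_iff_not (P := fun j => r p (f j))
    (fun j => ⟨fun h1 h0 => ?_, fun h0 => ?_⟩) (by simpa using congrArg (r p) (hper 0))
  · exact hS.not_rel_of_isCaptain hT (hcap j) hp h0 h1
  · exact (hcover (j + 1)).resolve_right
      (hS.not_rel_of_isCaptain hT (hcap j) hq ((hcover j).resolve_left h0))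

end Cycle

theorem stmt17 [DecidableEq V] (r : V → V → Prop) [DecidableRel r] (s : Finset V)
    (hT : IsTournament r s) (R R2 : Finset V)
    (hR : MinRetentive r s R) (hcard : R.card = 3)
    (hR2 : MinRetentive r s R2) (hne : R2 ≠ R)
    (v : V) (hv : v ∈ R2) (S : Finset V) (hS : MinRetentive r (inn r s v) S)
    (n : ℕ) (hn : 0 < n) (c : Fin n → V) (hinj : Function.Injective c)
    (hcyc : ∀ i : Fin n, IsCaptain r S (c i) (c ⟨(i.val + 1) % n, Nat.mod_lt _ hn⟩)) :
    False := by
  have hdisj : Disjoint R2 R := hR2.disjoint hR hne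
  have hvR : v ∉ R := Finset.disjoint_left.1 hdisj hv
  obtain ⟨x, y, z, hxy, hyz, hzx⟩ := hR.exists_isCaptain_triangle hT hcard
  obtain ⟨p, q, hpq, hpv, hqv⟩ :=
    hR.1.exists_isCaptain_rel_of_triangle hT hxy hyz hzx (hR2.1.1 hv) hvR
  have hinn : ∀ {u}, u ∈ R → r u v → u ∈ inn r s v := fun hu huv =>
    mem_inn_s17.2 ⟨ne_of_mem_of_not_mem hu hvR, hR.1.1 hu, huv⟩
  have hSR2 : S ⊆ R2 := fun w hw => hR2.1.2.2 v hv ⟨w, hS.1.1 hw⟩ (hS.coe_subset_tau hw)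
  have hnotS : ∀ {u}, u ∈ R → u ∉ S := fun hu huS =>
    Finset.disjoint_left.1 hdisj (hSR2 huS) hu
  have hD : IsTournament r (inn r s v) := hT.mono inn_subset_s17
  obtain ⟨f, hper, hfinj, hcap⟩ := exists_periodic_of_isCaptain_fin_cycle hn hinj hcyc
  have hodd : Odd n := (hD.mono hS.1.1).odd_of_isCaptain_cycle hn hper hfinj hcap
  have heven : Even n := hS.1.even_of_isCaptain_cycle hD (hinn hpq.1 hpv) (hinn hpq.2.1 hqv)
    (hnotS hpq.1) (hnotS hpq.2.1)
    (fun w hw => hR.1.not_rel_of_isCaptain hT hpq (inn_subset_s17 (hS.1.1 hw))) hper hcap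
  exact Nat.not_even_iff_odd.2 hodd heven
end
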